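/- arXiv:1510.08234 — 4 statements merged into one kernel-verified Lean document; each statement's English description precedes it below -/
import Mathlib

section
/- Linear convergence under a quadratic-type KL inequality (Corollary 4.7): let r̄ > 0 and ℓ > 0, and assume ‖∂⁰f(x)‖² ≥ 2ℓ·f(x) for every x with 0 < f(x) < r̄ (i.e. f has the KL property on {0 < f < r̄} with desingularizing function φ(s) = √(2s/ℓ)). Let (x_k)_{k≥0} be a subgradient descent sequence for f with constants a, b > 0 and f(x₀) ∈ (0,r̄), and set σ = ℓ/b². Then (x_k) converges strongly to some x* ∈ argmin f and for all k: f(x_k) ≤ f(x₀)/(1 + 2aσ)^k (k ≥ 0), and ‖x_k − x*‖ ≤ [1 + 1/(aσ·√(1 + 1/(2aσ)))] · √(f(x₀)/a) / (1 + 2aσ)^{(k−1)/2} (k ≥ 1). -/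
/-!
Along the sequence, `r k = f(x_k)` and `d k = ‖x_{k+1} - x_k‖` satisfy `r_{k+1} + a d_k² ≤ r_k`
by (H1) and `2σ r_{k+1} ≤ d_k²` by (H2) and the KL inequality, so `r_{k+1} (1 + 2aσ) ≤ r_k`.
For the iterates, put `g = √r`: then `a d_{k+1}² ≤ 2 g_{k+1} (g_{k+1} - g_{k+2})` and
`√(2σ) g_{k+1} ≤ d_k`, so AM-GM gives `2 d_{k+1} ≤ d_k + c (g_{k+1} - g_{k+2})` with
`c = 2 / (a √(2σ))`. Telescoping bounds the tail `∑_{j > k} d_j` by `d_k + c g_{k+1}`, which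
decays like `(1 + 2aσ)^{-k/2}`; hence `(x_k)` is Cauchy, and lower semicontinuity makes its
limit a minimizer.
-/

open Metric Set Filter
open scoped RealInnerProductSpace

noncomputable section

variable {H : Type*} [NormedAddCommGroup H] [InnerProductSpace ℝ H] [CompleteSpace H]

def subdiff (f : H → EReal) (x : H) : Set H :=
  {u | ∀ y : H, f x + ((⟪u, y - x⟫ : ℝ) : EReal) ≤ f y}

def argminSet (f : H → EReal) : Set H := {x | ∀ y, f x ≤ f y}

open Finset in
theorem sum_range_le_of_two_mul_le {d G : ℕ → ℝ} (hd : ∀ j, 0 ≤ d j)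
    (h : ∀ j, 2 * d (j + 1) ≤ d j + (G j - G (j + 1))) (N : ℕ) :
    ∑ i ∈ range N, d (i + 1) ≤ d 0 + (G 0 - G N) := by
  suffices ∀ N, ∑ i ∈ range N, d (i + 1) + d N ≤ d 0 + (G 0 - G N) from
    (le_add_of_nonneg_right (hd N)).trans (this N)
  intro N
  induction N with
  | zero => simp
  | succ n ih =>
    rw [sum_range_succ]
    linarith [h n]

theorem le_div_pow_of_mul_le {u : ℕ → ℝ} {q : ℝ} (hq : 0 < q) (h : ∀ k, u (k + 1) * q ≤ u k)
    (k : ℕ) : u k ≤ u 0 / q ^ k := by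
  induction k with
  | zero => simp
  | succ k ih =>
    rw [pow_succ, ← div_div, le_div_iff₀ hq]
    exact (h k).trans ih

theorem sqrt_le_div_rpow_of_le_div_pow {u c q : ℝ} (hq : 0 ≤ q) {k : ℕ} (h : u ≤ c / q ^ k) :
    √u ≤ √c / q ^ ((k : ℝ) / 2) := by
  calc √u ≤ √(c / q ^ k) := Real.sqrt_le_sqrt h
    _ = √c / q ^ ((k : ℝ) / 2) := by
      rw [Real.sqrt_div' _ (pow_nonneg hq k), Real.sqrt_eq_rpow (q ^ k), ← Real.rpow_natCast,
        ← Real.rpow_mul hq, mul_one_div]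

open Finset in
theorem exists_tendsto_dist_le_of_sum_range_le {X : Type*} [PseudoMetricSpace X]
    [CompleteSpace X] {x : ℕ → X} {B : ℕ → ℝ}
    (h : ∀ k N, ∑ i ∈ range N, dist (x (k + i)) (x (k + i + 1)) ≤ B k) :
    ∃ y, Tendsto x atTop (nhds y) ∧ ∀ k, dist (x k) y ≤ B k := by
  have hsum : Summable fun n => dist (x n) (x n.succ) :=
    summable_of_sum_range_le (fun _ => dist_nonneg) fun N => by simpa using h 0 N
  obtain ⟨y, hy⟩ := cauchySeq_tendsto_of_complete (cauchySeq_of_summable_dist hsum)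
  refine ⟨y, hy, fun k => (dist_le_tsum_dist_of_tendsto hsum hy k).trans ?_⟩
  exact Real.tsum_le_of_sum_range_le (fun _ => dist_nonneg) (h k)

theorem rate_constant_eq {a σ R : ℝ} (ha : 0 < a) (hσ : 0 < σ) (hR : 0 ≤ R) :
    2 / (a * √(2 * σ)) * √R / √(1 + 2 * a * σ) =
      1 / (a * σ * √(1 + 1 / (2 * a * σ))) * √(R / a) := by
  rw [← sq_eq_sq₀ (by positivity) (by positivity)]
  simp only [div_pow, mul_pow]
  rw [Real.sq_sqrt (by positivity), Real.sq_sqrt hR, Real.sq_sqrt (by positivity),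
    Real.sq_sqrt (by positivity), Real.sq_sqrt (by positivity)]
  field_simp
  ring

structure KLDescent (r d : ℕ → ℝ) (a σ : ℝ) : Prop where
  nonneg : ∀ k, 0 ≤ r k
  step_nonneg : ∀ k, 0 ≤ d k
  descent : ∀ k, r (k + 1) + a * d k ^ 2 ≤ r k
  kl : ∀ k, 2 * σ * r (k + 1) ≤ d k ^ 2

namespace KLDescent

variable {r d : ℕ → ℝ} {a σ : ℝ}

theorem succ_le (h : KLDescent r d a σ) (ha : 0 ≤ a) (k : ℕ) : r (k + 1) ≤ r k := by
  nlinarith [h.descent k, h.step_nonneg k]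

theorem succ_mul_le (h : KLDescent r d a σ) (ha : 0 ≤ a) (k : ℕ) :
    r (k + 1) * (1 + 2 * a * σ) ≤ r k := by
  nlinarith [h.descent k, mul_le_mul_of_nonneg_left (h.kl k) ha]

theorem le_div_pow (h : KLDescent r d a σ) (ha : 0 ≤ a) (hσ : 0 ≤ σ) (k : ℕ) :
    r k ≤ r 0 / (1 + 2 * a * σ) ^ k :=
  le_div_pow_of_mul_le (by positivity) (h.succ_mul_le ha) k

theorem tendsto_zero (h : KLDescent r d a σ) (ha : 0 < a) (hσ : 0 < σ) :
    Tendsto r atTop (nhds 0) := by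
  have hq : Tendsto (fun k => r 0 / (1 + 2 * a * σ) ^ k) atTop (nhds 0) :=
    tendsto_const_nhds.div_atTop (tendsto_pow_atTop_atTop_of_one_lt (by nlinarith))
  exact squeeze_zero h.nonneg (h.le_div_pow ha.le hσ.le) hq

theorem step_le_sqrt (h : KLDescent r d a σ) (ha : 0 < a) (k : ℕ) : d k ≤ √(r k / a) := by
  rw [Real.le_sqrt (h.step_nonneg k) (div_nonneg (h.nonneg k) ha.le), le_div_iff₀ ha]
  nlinarith [h.descent k, h.nonneg (k + 1)]

theorem two_mul_step_le (h : KLDescent r d a σ) (ha : 0 < a) (hσ : 0 < σ) (k : ℕ) :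
    2 * d (k + 1) ≤ d k + 2 / (a * √(2 * σ)) * (√(r (k + 1)) - √(r (k + 2))) := by
  set g₁ := √(r (k + 1))
  set g₂ := √(r (k + 2))
  set s := √(2 * σ)
  have hs : 0 < s := Real.sqrt_pos.mpr (by positivity)
  have hg : g₂ ≤ g₁ := Real.sqrt_le_sqrt (h.succ_le ha.le (k + 1))
  have hgs : s * g₁ ≤ d k := by
    calc s * g₁ = √(2 * σ * r (k + 1)) := (Real.sqrt_mul (by positivity) _).symm
      _ ≤ √(d k ^ 2) := Real.sqrt_le_sqrt (h.kl k)
      _ = d k := Real.sqrt_sq (h.step_nonneg k)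
  have hdesc : a * d (k + 1) ^ 2 ≤ g₁ ^ 2 - g₂ ^ 2 := by
    rw [Real.sq_sqrt (h.nonneg _), Real.sq_sqrt (h.nonneg _)]
    linarith [h.descent (k + 1)]
  have hsq : d (k + 1) ^ 2 ≤ d k * (2 / (a * s) * (g₁ - g₂)) := by
    rw [← mul_le_mul_iff_of_pos_left (mul_pos ha hs)]
    calc a * s * d (k + 1) ^ 2 = s * (a * d (k + 1) ^ 2) := by ring
      _ ≤ s * (2 * g₁ * (g₁ - g₂)) :=
        mul_le_mul_of_nonneg_left (by nlinarith [Real.sqrt_nonneg (r (k + 2))]) hs.le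
      _ = 2 * (s * g₁) * (g₁ - g₂) := by ring
      _ ≤ 2 * d k * (g₁ - g₂) := by gcongr
      _ = a * s * (d k * (2 / (a * s) * (g₁ - g₂))) := by field_simp
  exact two_mul_le_add_of_sq_le_mul (h.step_nonneg k)
    (mul_nonneg (by positivity) (sub_nonneg.mpr hg)) hsq

theorem step_le (h : KLDescent r d a σ) (ha : 0 < a) (hσ : 0 ≤ σ) (k : ℕ) :
    d k ≤ √(r 0 / a) / (1 + 2 * a * σ) ^ ((k : ℝ) / 2) := by
  refine (h.step_le_sqrt ha k).trans (sqrt_le_div_rpow_of_le_div_pow (by positivity) ?_)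
  rw [div_right_comm]
  exact div_le_div_of_nonneg_right (h.le_div_pow ha.le hσ k) ha.le

theorem sqrt_le (h : KLDescent r d a σ) (ha : 0 ≤ a) (hσ : 0 ≤ σ) (k : ℕ) :
    √(r k) ≤ √(r 0) / (1 + 2 * a * σ) ^ ((k : ℝ) / 2) :=
  sqrt_le_div_rpow_of_le_div_pow (by positivity) (h.le_div_pow ha hσ k)

open Finset in
theorem sum_range_step_le (h : KLDescent r d a σ) (ha : 0 < a) (hσ : 0 < σ) (k N : ℕ) :
    ∑ i ∈ range N, d (k + i + 1) ≤ d k + 2 / (a * √(2 * σ)) * √(r (k + 1)) := by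
  have hG : 0 ≤ 2 / (a * √(2 * σ)) * √(r (k + N + 1)) := by positivity
  have := sum_range_le_of_two_mul_le (fun j => h.step_nonneg (k + j))
    (G := fun j => 2 / (a * √(2 * σ)) * √(r (k + j + 1)))
    (fun j => by rw [← mul_sub]; exact h.two_mul_step_le ha hσ (k + j)) N
  simp only [add_zero, ← add_assoc] at this
  linarith

theorem step_add_sqrt_le (h : KLDescent r d a σ) (ha : 0 < a) (hσ : 0 < σ) (k : ℕ) :
    d k + 2 / (a * √(2 * σ)) * √(r (k + 1)) ≤
      (1 + 1 / (a * σ * √(1 + 1 / (2 * a * σ)))) * √(r 0 / a) /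
        (1 + 2 * a * σ) ^ ((k : ℝ) / 2) := by
  have hq : 0 < 1 + 2 * a * σ := by positivity
  calc d k + 2 / (a * √(2 * σ)) * √(r (k + 1))
      ≤ √(r 0 / a) / (1 + 2 * a * σ) ^ ((k : ℝ) / 2) +
          2 / (a * √(2 * σ)) * (√(r 0) / (1 + 2 * a * σ) ^ (((k + 1 : ℕ) : ℝ) / 2)) := by
        gcongr
        exacts [h.step_le ha hσ.le k, h.sqrt_le ha.le hσ.le (k + 1)]
    _ = _ := by
        rw [Nat.cast_succ, add_div, Real.rpow_add hq, ← Real.sqrt_eq_rpow, add_mul, one_mul,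
          ← rate_constant_eq ha hσ (h.nonneg 0)]
        field_simp

end KLDescent

theorem mem_argminSet_of_tendsto {X : Type*} [TopologicalSpace X] {f : X → EReal}
    (hf : LowerSemicontinuous f) {z : X} (hz : z ∈ argminSet f) {x : ℕ → X} {y : X}
    (hx : Tendsto x atTop (nhds y))
    (hfx : Tendsto (f ∘ x) atTop (nhds (f z))) : y ∈ argminSet f := by
  refine fun w => le_trans (le_of_forall_lt_imp_le_of_dense fun c hc => ?_) (hz w)
  exact ge_of_tendsto hfx ((hx.eventually (hf y c hc)).mono fun _ => le_of_lt)

section SubgradientDescent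

variable {E : Type*} [NormedAddCommGroup E] {f : E → EReal} {x : ℕ → E} {a : ℝ}

theorem antitone_comp_of_descent (ha : 0 ≤ a)
    (hH1 : ∀ k : ℕ, f (x (k + 1)) + ((a * ‖x (k + 1) - x k‖ ^ 2 : ℝ) : EReal) ≤ f (x k)) :
    Antitone (f ∘ x) :=
  antitone_nat_of_succ_le fun k =>
    (le_add_of_nonneg_right (EReal.coe_nonneg.mpr (by positivity))).trans (hH1 k)

theorem klDescent_of_subgradient_descent [InnerProductSpace ℝ E] (hbot : ∀ y, f y ≠ ⊥)
    (hf0 : ∀ y, 0 ≤ f y) {rbar ℓ b : ℝ} (hKL : ∀ y, 0 < f y → f y < (rbar : EReal) →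
      ∀ u ∈ subdiff f y, 2 * ℓ * (f y).toReal ≤ ‖u‖ ^ 2)
    (hb : 0 < b) (ha : 0 ≤ a)
    (hH1 : ∀ k : ℕ, f (x (k + 1)) + ((a * ‖x (k + 1) - x k‖ ^ 2 : ℝ) : EReal) ≤ f (x k))
    (hH2 : ∀ k : ℕ, ∃ ω ∈ subdiff f (x (k + 1)), ‖ω‖ ≤ b * ‖x (k + 1) - x k‖)
    (hfx0 : f (x 0) < (rbar : EReal)) :
    (∀ k, ((f (x k)).toReal : EReal) = f (x k)) ∧
      KLDescent (fun k => (f (x k)).toReal) (fun k => ‖x (k + 1) - x k‖) a (ℓ / b ^ 2) := by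
  have hanti := antitone_comp_of_descent ha hH1
  have hlt : ∀ k, f (x k) < rbar := fun k => (hanti k.zero_le).trans_lt hfx0
  have hfin : ∀ k, ((f (x k)).toReal : EReal) = f (x k) := fun k =>
    EReal.coe_toReal ((hlt k).trans (EReal.coe_lt_top rbar)).ne (hbot _)
  refine ⟨hfin, fun k => EReal.toReal_nonneg (hf0 _), fun k => norm_nonneg _, fun k => ?_,
    fun k => ?_⟩
  · have := hH1 k
    rw [← hfin k, ← hfin (k + 1)] at this
    exact_mod_cast this
  · obtain ⟨ω, hω, hωb⟩ := hH2 k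
    rcases (hf0 (x (k + 1))).lt_or_eq with hpos | hzero
    · calc 2 * (ℓ / b ^ 2) * (f (x (k + 1))).toReal
          = 2 * ℓ * (f (x (k + 1))).toReal / b ^ 2 := by ring
        _ ≤ (b * ‖x (k + 1) - x k‖) ^ 2 / b ^ 2 := by
          gcongr
          exact (hKL _ hpos (hlt _) ω hω).trans (pow_le_pow_left₀ (norm_nonneg _) hωb 2)
        _ = ‖x (k + 1) - x k‖ ^ 2 := by field_simp
    · simp [← hzero]

end SubgradientDescent

theorem stmt13_general (f : H → EReal)
    (hbot : ∀ x, f x ≠ ⊥)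
    (hlsc : LowerSemicontinuous f)
    (hmin : ∃ z, z ∈ argminSet f ∧ f z = 0)
    (rbar ℓ : ℝ) (hℓ : 0 < ℓ)
    (hKL : ∀ x, 0 < f x → f x < (rbar : EReal) →
      ∀ u ∈ subdiff f x, 2 * ℓ * (f x).toReal ≤ ‖u‖ ^ 2)
    (a b : ℝ) (ha : 0 < a) (hb : 0 < b)
    (x : ℕ → H)
    (hH1 : ∀ k : ℕ, f (x (k + 1)) + ((a * ‖x (k + 1) - x k‖ ^ 2 : ℝ) : EReal) ≤ f (x k))
    (hH2 : ∀ k : ℕ, ∃ ω ∈ subdiff f (x (k + 1)), ‖ω‖ ≤ b * ‖x (k + 1) - x k‖)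
    (hfx0 : f (x 0) < (rbar : EReal))
    (σ : ℝ) (hσ : σ = ℓ / b ^ 2) :
    ∃ xstar ∈ argminSet f, Tendsto x atTop (nhds xstar) ∧
      (∀ k : ℕ, (f (x k)).toReal ≤ (f (x 0)).toReal / (1 + 2 * a * σ) ^ k) ∧
      ∀ k : ℕ, ‖x (k + 1) - xstar‖ ≤
        (1 + 1 / (a * σ * Real.sqrt (1 + 1 / (2 * a * σ)))) *
          Real.sqrt ((f (x 0)).toReal / a) / (1 + 2 * a * σ) ^ ((k : ℝ) / 2) := by
  obtain ⟨z, hz, hz0⟩ := hmin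
  have hσ0 : 0 < σ := hσ ▸ by positivity
  obtain ⟨hfin, hkl⟩ := klDescent_of_subgradient_descent hbot (fun y => hz0 ▸ hz y) hKL hb ha.le
    hH1 hH2 hfx0
  rw [← hσ] at hkl
  obtain ⟨xstar, hxstar, hdist⟩ := exists_tendsto_dist_le_of_sum_range_le
    (x := fun k => x (k + 1)) fun k N => by
      simpa only [dist_eq_norm'] using hkl.sum_range_step_le ha hσ0 k N
  have hx : Tendsto x atTop (nhds xstar) := (tendsto_add_atTop_iff_nat 1).mp hxstar
  have hfx : Tendsto (f ∘ x) atTop (nhds (f z)) := by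
    simpa only [hz0, Function.comp_def, hfin, EReal.coe_zero] using
      EReal.tendsto_coe.mpr (hkl.tendsto_zero ha hσ0)
  refine ⟨xstar, mem_argminSet_of_tendsto hlsc hz hx hfx, hx, hkl.le_div_pow ha.le hσ0.le,
    fun k => ?_⟩
  calc ‖x (k + 1) - xstar‖ = dist (x (k + 1)) xstar := (dist_eq_norm _ _).symm
    _ ≤ _ := (hdist k).trans (hkl.step_add_sqrt_le ha hσ0 k)

/-- **Corollary 4.7** (linear convergence under a quadratic-type KL inequality):
assume `‖∂⁰f(x)‖² ≥ 2ℓ·f(x)` whenever `0 < f(x) < r̄` (i.e. `f` is KL with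
desingularizing function `φ(s) = √(2s/ℓ)`), and let `(x_k)` be a subgradient
descent sequence with constants `a, b > 0` and `f(x₀) ∈ (0,r̄)`.  With
`σ = ℓ/b²`, the sequence converges strongly to some `x* ∈ argmin f`,
`f(x_k) ≤ f(x₀)/(1+2aσ)^k` for `k ≥ 0`, and
`‖x_k − x*‖ ≤ [1 + 1/(aσ√(1+1/(2aσ)))]·√(f(x₀)/a)/(1+2aσ)^{(k−1)/2}` for
`k ≥ 1` (the latter stated with the index shift `k ↦ k+1`). -/
theorem stmt13 (f : H → EReal)
    (hbot : ∀ x, f x ≠ ⊥) (htop : ∃ x, f x ≠ ⊤)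
    (hlsc : LowerSemicontinuous f)
    (hconv : ∀ x y : H, ∀ t : ℝ, 0 < t → t < 1 →
      f (t • x + (1 - t) • y) ≤ (t : EReal) * f x + ((1 - t : ℝ) : EReal) * f y)
    (hmin : ∃ z, z ∈ argminSet f ∧ f z = 0)
    (rbar ℓ : ℝ) (hrbar : 0 < rbar) (hℓ : 0 < ℓ)
    (hKL : ∀ x, 0 < f x → f x < (rbar : EReal) →
      ∀ u ∈ subdiff f x, 2 * ℓ * (f x).toReal ≤ ‖u‖ ^ 2)
    (a b : ℝ) (ha : 0 < a) (hb : 0 < b)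
    (x : ℕ → H)
    (hH1 : ∀ k : ℕ, f (x (k + 1)) + ((a * ‖x (k + 1) - x k‖ ^ 2 : ℝ) : EReal) ≤ f (x k))
    (hH2 : ∀ k : ℕ, ∃ ω ∈ subdiff f (x (k + 1)), ‖ω‖ ≤ b * ‖x (k + 1) - x k‖)
    (hfx0pos : 0 < f (x 0)) (hfx0 : f (x 0) < (rbar : EReal))
    (σ : ℝ) (hσ : σ = ℓ / b ^ 2) :
    ∃ xstar ∈ argminSet f, Tendsto x atTop (nhds xstar) ∧
      (∀ k : ℕ, (f (x k)).toReal ≤ (f (x 0)).toReal / (1 + 2 * a * σ) ^ k) ∧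
      ∀ k : ℕ, ‖x (k + 1) - xstar‖ ≤
        (1 + 1 / (a * σ * Real.sqrt (1 + 1 / (2 * a * σ)))) *
          Real.sqrt ((f (x 0)).toReal / a) / (1 + 2 * a * σ) ^ ((k : ℝ) / 2) :=
  stmt13_general f hbot hlsc hmin rbar ℓ hℓ hKL a b ha hb x hH1 hH2 hfx0 σ hσ
end
end

section
/- Complexity of the barycentric projection method for regular intersections: let m ≥ 2, let C₁, …, C_m be closed convex subsets of H with B(x̄, R) ⊆ C := ⋂_{i=1}^m C_i for some x̄ ∈ H and R > 0, let α₁, …, α_m > 0 with Σᵢ αᵢ = 1, set f(x) = ½ Σᵢ αᵢ·dist(x, C_i)², and define the sequence x_{k+1} = Σᵢ αᵢ·P_{C_i}(x_k) from a starting point x₀ ∈ H. Set M = ¼ (1 + 2‖x₀ − x̄‖/R)^{2−2m}·min_i αᵢ. Then (x_k) converges strongly to some x* ∈ C, and for all k: f(x_k) ≤ f(x₀)/(1 + M/4)^k (k ≥ 0), and ‖x_k − x*‖ ≤ [1 + 8/(M·√(1 + 4/M))] · √(2 f(x₀)) / (1 + M/4)^{(k−1)/2} (k ≥ 1). -/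
/-
With `Φ = 2f = ∑ αᵢ ‖z - Pᵢ z‖²` and `T z = ∑ αᵢ Pᵢ z`, the variational inequality of the
projections gives `Φ z ≤ ⟪z - T z, z - y⟫` for every `y ∈ C`, and the variance identity for the
points `z - Pᵢ z` gives `‖z - T z‖² ≤ Φ z` and `Φ (T z) ≤ Φ z - ‖z - T z‖²`. Hence the iterates
are Fejér monotone with respect to `C` and stay within `‖x₀ - x̄‖` of `x̄`. Because
`B(x̄, R) ⊆ C`, a point within `ε` of every `Cᵢ` is within `ε ‖z - x̄‖ / R` of `C` (shrink
towards `x̄`), which yields the error bound `4M dist(x_k, C)² ≤ Φ(x_k)`; with the two inequalities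
above this gives `Φ(x_{k+1}) ≤ (1 - 4M) Φ(x_k)`. Fejér monotonicity then provides a limit
`x* ∈ C` with `‖x_k - x*‖ ≤ 2 dist(x_k, C)`.
-/

open Metric Set Filter

noncomputable section

open scoped RealInnerProductSpace Topology

section

variable {H : Type*} [NormedAddCommGroup H]

def IsMetricProj (C : Set H) (p : H → H) : Prop :=
  ∀ z, p z ∈ C ∧ ∀ y ∈ C, ‖z - p z‖ ≤ ‖z - y‖

theorem IsMetricProj.infDist_eq {C : Set H} {p : H → H} (hp : IsMetricProj C p) (z : H) :
    infDist z C = ‖z - p z‖ := by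
  refine le_antisymm ?_ ((le_infDist ⟨_, (hp z).1⟩).2 fun y hy => ?_)
  · simpa only [dist_eq_norm] using infDist_le_dist_of_mem (hp z).1
  · simpa only [dist_eq_norm] using (hp z).2 y hy

section InnerProductSpace

variable [InnerProductSpace ℝ H]

theorem IsMetricProj.sq_norm_le_inner {C : Set H} {p : H → H} (hp : IsMetricProj C p)
    (hC : Convex ℝ C) (z : H) {y : H} (hy : y ∈ C) : ‖z - p z‖ ^ 2 ≤ ⟪z - p z, z - y⟫ := by
  have : Nonempty C := ⟨⟨y, hy⟩⟩
  have hmin : ‖z - p z‖ = ⨅ w : C, ‖z - w‖ :=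
    le_antisymm (le_ciInf fun w => (hp z).2 w w.2)
      (ciInf_le (f := fun w : C => ‖z - w‖) ⟨0, by rintro _ ⟨w, rfl⟩; positivity⟩ ⟨p z, (hp z).1⟩)
  have hvar := (norm_eq_iInf_iff_real_inner_le_zero hC (hp z).1).1 hmin y hy
  have : ⟪z - p z, z - y⟫ = ‖z - p z‖ ^ 2 - ⟪z - p z, y - p z⟫ := by
    rw [← real_inner_self_eq_norm_sq, ← inner_sub_right, sub_sub_sub_cancel_right]
  linarith

theorem sum_mul_sq_norm_sub_sum_smul {ι : Type*} [Fintype ι] (w : ι → ℝ) (v : ι → H)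
    (hw : ∑ i, w i = 1) :
    ∑ i, w i * ‖v i - ∑ j, w j • v j‖ ^ 2 = ∑ i, w i * ‖v i‖ ^ 2 - ‖∑ j, w j • v j‖ ^ 2 := by
  set v₀ := ∑ j, w j • v j
  have hmean : ∑ i, w i * ⟪v i, v₀⟫ = ‖v₀‖ ^ 2 := by
    simp only [v₀, ← real_inner_self_eq_norm_sq, sum_inner, real_inner_smul_left]
  simp only [norm_sub_sq_real, mul_add, mul_sub, Finset.sum_add_distrib, Finset.sum_sub_distrib,
    ← Finset.sum_mul, hw]
  simp only [mul_left_comm _ (2 : ℝ), ← Finset.mul_sum, hmean]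
  ring

end InnerProductSpace

section Regularity

variable [NormedSpace ℝ H] {xbar : H} {R : ℝ}

theorem Convex.add_smul_sub_mem_of_closedBall_subset {C : Set H} (hC : Convex ℝ C) (hR : 0 < R)
    (hball : closedBall xbar R ⊆ C) {p z : H} (hp : p ∈ C) {ε : ℝ} (hε : ‖z - p‖ ≤ ε) :
    z + (ε / (ε + R)) • (xbar - z) ∈ C := by
  rcases (norm_nonneg _).trans hε |>.eq_or_lt with rfl | hεpos
  · rwa [zero_div, zero_smul, add_zero, sub_eq_zero.1 (norm_le_zero_iff.1 hε)]
  set t := ε / (ε + R)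
  have ht : t * (R / ε) = 1 - t := by simp only [t]; field_simp; ring
  have hb : xbar + (R / ε) • (z - p) ∈ C := hball <| by
    rw [mem_closedBall, dist_eq_norm, add_sub_cancel_left, norm_smul,
      Real.norm_of_nonneg (by positivity)]
    calc R / ε * ‖z - p‖ ≤ R / ε * ε := by gcongr
      _ = R := by field_simp
  -- `z + t • (xbar - z) = (1 - t) • p + t • (xbar + (R / ε) • (z - p))`
  convert hC.add_smul_sub_mem hp hb (t := t)
    ⟨by positivity, div_le_one_of_le₀ (by linarith) (by positivity)⟩ using 1
  rw [add_sub_right_comm, smul_add, smul_smul, ht]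
  module

theorem exists_mem_iInter_mul_norm_sub_le {ι : Type*} {C : ι → Set H}
    (hconv : ∀ i, Convex ℝ (C i)) (hR : 0 < R) (hball : closedBall xbar R ⊆ ⋂ i, C i) {p : ι → H} (hp : ∀ i, p i ∈ C i)
    {z : H} {ε : ℝ} (hε0 : 0 ≤ ε) (hε : ∀ i, ‖z - p i‖ ≤ ε) :
    ∃ w ∈ ⋂ i, C i, R * ‖z - w‖ ≤ ε * ‖z - xbar‖ := by
  refine ⟨z + (ε / (ε + R)) • (xbar - z), mem_iInter.2 fun i =>
    (hconv i).add_smul_sub_mem_of_closedBall_subset hR (subset_iInter_iff.1 hball i) (hp i) (hε i),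
    ?_⟩
  rw [sub_add_cancel_left, norm_neg, norm_smul, Real.norm_of_nonneg (by positivity), norm_sub_rev,
    ← mul_assoc]
  gcongr
  rw [mul_div_assoc', div_le_iff₀ (by positivity)]
  nlinarith

end Regularity

theorem exists_tendsto_of_antitone_dist {X : Type*} [PseudoMetricSpace X] [CompleteSpace X]
    {S : Set X} (hS : IsClosed S) {x : ℕ → X} (hx : ∀ y ∈ S, Antitone fun k => dist (x k) y)
    {e : ℕ → ℝ} (he : Tendsto e atTop (𝓝 0)) (hnear : ∀ k, ∃ w ∈ S, dist (x k) w ≤ e k) :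
    ∃ xs ∈ S, Tendsto x atTop (𝓝 xs) ∧ ∀ k, dist (x k) xs ≤ 2 * e k := by
  choose w hwS hw using hnear
  have hclose : ∀ k j, k ≤ j → dist (x k) (x j) ≤ 2 * e k := fun k j hkj =>
    calc dist (x k) (x j) ≤ dist (x k) (w k) + dist (x j) (w k) := dist_triangle_right _ _ _
      _ ≤ e k + e k := add_le_add (hw k) ((hx _ (hwS k) hkj).trans (hw k))
      _ = 2 * e k := by ring
  have he2 : Tendsto (fun k => 2 * e k) atTop (𝓝 0) := by simpa using he.const_mul 2
  obtain ⟨xs, hxs⟩ := cauchySeq_tendsto_of_complete (cauchySeq_of_le_tendsto_0' _ hclose he2)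
  have hdist : ∀ k, dist (x k) xs ≤ 2 * e k := fun k =>
    le_of_tendsto (tendsto_const_nhds.dist hxs) (eventually_atTop.2 ⟨k, hclose k⟩)
  have hwxs : Tendsto w atTop (𝓝 xs) := by
    refine tendsto_iff_dist_tendsto_zero.2 (squeeze_zero (fun _ => dist_nonneg) (fun k => ?_)
      (by simpa using he.const_mul 3 : Tendsto (fun k => 3 * e k) atTop (𝓝 0)))
    calc dist (w k) xs ≤ dist (x k) (w k) + dist (x k) xs := dist_triangle_left _ _ _
      _ ≤ e k + 2 * e k := add_le_add (hw k) (hdist k)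
      _ = 3 * e k := by ring
  exact ⟨xs, hS.mem_of_tendsto hwxs (Eventually.of_forall hwS), hxs, hdist⟩

theorem sqrt_div_mul_pow_le {M : ℝ} (hM : 0 < M) (S : ℝ) (k : ℕ) :
    √(S / (M * (1 + M / 4) ^ k)) ≤
      (1 + 8 / (M * √(1 + 4 / M))) * √S / (1 + M / 4) ^ (((k : ℝ) - 1) / 2) := by
  set B := 1 + M / 4
  set d := M * √(1 + 4 / M)
  set u := B ^ (((k : ℝ) - 1) / 2)
  have hB : 0 < B := by positivity
  have hu : 0 < u := by positivity
  have hpow : M * B ^ k = (M * B) * u ^ 2 := by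
    rw [mul_assoc, ← Real.rpow_natCast u, ← Real.rpow_mul hB.le, mul_comm B,
      ← Real.rpow_add_one hB.ne', ← Real.rpow_natCast]
    norm_num
  have hMB : √(M * B) = d / 2 := by
    rw [show M * B = (M / 2) ^ 2 * (1 + 4 / M) by simp only [B]; field_simp; ring,
      Real.sqrt_mul (by positivity), Real.sqrt_sq (by positivity)]
    ring
  have hkey : √(S / (M * B ^ k)) = 2 / d * √S / u := by
    rw [hpow, Real.sqrt_div' _ (by positivity),
      Real.sqrt_mul (by positivity), Real.sqrt_sq hu.le, hMB]
    field_simp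
  have hd : 2 / d ≤ 8 / d := by gcongr; norm_num
  rw [hkey]
  gcongr
  linarith

theorem ciInf_pos_of_finite {ι : Type*} [Finite ι] [Nonempty ι] {α : ι → ℝ}
    (hα : ∀ i, 0 < α i) : 0 < ⨅ i, α i := by
  obtain ⟨i, hi⟩ := exists_eq_ciInf_of_finite (f := α)
  exact (hα i).trans_eq hi

theorem zpow_two_sub_two_mul (D : ℝ) {m : ℕ} (hm : 1 ≤ m) :
    D ^ ((2 : ℤ) - 2 * m) = ((D ^ (m - 1)) ^ 2)⁻¹ := by
  rw [← pow_mul, show (2 : ℤ) - 2 * m = -((m - 1) * 2 : ℕ) by push_cast [Nat.cast_sub hm]; ring,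
    zpow_neg, zpow_natCast]

section Barycentric

variable {ι : Type*} [Fintype ι] {α : ι → ℝ} {P : ι → H → H} {C : ι → Set H}

def weightedSqDist (α : ι → ℝ) (P : ι → H → H) (z : H) : ℝ := ∑ i, α i * ‖z - P i z‖ ^ 2

theorem weightedSqDist_nonneg (hα : ∀ i, 0 ≤ α i) (z : H) : 0 ≤ weightedSqDist α P z :=
  Finset.sum_nonneg fun i _ => mul_nonneg (hα i) (sq_nonneg _)

theorem mul_sq_norm_sub_le_weightedSqDist (hα : ∀ i, 0 ≤ α i) (z : H) (i : ι) :
    α i * ‖z - P i z‖ ^ 2 ≤ weightedSqDist α P z :=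
  Finset.single_le_sum (f := fun j => α j * ‖z - P j z‖ ^ 2)
    (fun j _ => mul_nonneg (hα j) (sq_nonneg _)) (Finset.mem_univ i)

variable [InnerProductSpace ℝ H] {x : ℕ → H}

def baryMap (α : ι → ℝ) (P : ι → H → H) (z : H) : H := ∑ i, α i • P i z

theorem sub_baryMap (hα₁ : ∑ i, α i = 1) (z : H) :
    z - baryMap α P z = ∑ i, α i • (z - P i z) := by
  simp only [baryMap, smul_sub, Finset.sum_sub_distrib, ← Finset.sum_smul, hα₁, one_smul]

theorem sum_mul_sq_norm_baryMap_sub (hα₁ : ∑ i, α i = 1) (z : H) :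
    ∑ i, α i * ‖baryMap α P z - P i z‖ ^ 2 =
      weightedSqDist α P z - ‖z - baryMap α P z‖ ^ 2 := by
  rw [weightedSqDist, sub_baryMap hα₁, ← sum_mul_sq_norm_sub_sum_smul α _ hα₁, ← sub_baryMap hα₁]
  simp only [sub_sub_sub_cancel_left]

theorem sq_norm_sub_baryMap_le (hα : ∀ i, 0 ≤ α i) (hα₁ : ∑ i, α i = 1) (z : H) :
    ‖z - baryMap α P z‖ ^ 2 ≤ weightedSqDist α P z := by
  have := sum_mul_sq_norm_baryMap_sub (P := P) hα₁ z
  have : 0 ≤ ∑ i, α i * ‖baryMap α P z - P i z‖ ^ 2 :=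
    Finset.sum_nonneg fun i _ => mul_nonneg (hα i) (sq_nonneg _)
  linarith

theorem weightedSqDist_baryMap_le (hα : ∀ i, 0 ≤ α i) (hα₁ : ∑ i, α i = 1)
    (hP : ∀ i, IsMetricProj (C i) (P i)) (z : H) :
    weightedSqDist α P (baryMap α P z) ≤ weightedSqDist α P z - ‖z - baryMap α P z‖ ^ 2 := by
  rw [← sum_mul_sq_norm_baryMap_sub hα₁, weightedSqDist]
  gcongr with i
  · exact hα i
  · exact (hP i _).2 _ (hP i z).1

theorem weightedSqDist_le_inner (hα : ∀ i, 0 ≤ α i) (hα₁ : ∑ i, α i = 1)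
    (hP : ∀ i, IsMetricProj (C i) (P i)) (hconv : ∀ i, Convex ℝ (C i))
    (z : H) {y : H} (hy : y ∈ ⋂ i, C i) :
    weightedSqDist α P z ≤ ⟪z - baryMap α P z, z - y⟫ := by
  rw [sub_baryMap hα₁, sum_inner, weightedSqDist]
  refine Finset.sum_le_sum fun i _ => ?_
  rw [real_inner_smul_left]
  exact mul_le_mul_of_nonneg_left ((hP i).sq_norm_le_inner (hconv i) z (mem_iInter.1 hy i)) (hα i)

theorem norm_baryMap_sub_le (hα : ∀ i, 0 ≤ α i) (hα₁ : ∑ i, α i = 1)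
    (hP : ∀ i, IsMetricProj (C i) (P i)) (hconv : ∀ i, Convex ℝ (C i))
    (z : H) {y : H} (hy : y ∈ ⋂ i, C i) :
    ‖baryMap α P z - y‖ ≤ ‖z - y‖ := by
  have hsq : ‖baryMap α P z - y‖ ^ 2 ≤ ‖z - y‖ ^ 2 := by
    rw [show baryMap α P z - y = (z - y) - (z - baryMap α P z) by abel, norm_sub_sq_real,
      real_inner_comm]
    linarith [weightedSqDist_le_inner hα hα₁ hP hconv z hy,
      sq_norm_sub_baryMap_le hα hα₁ (P := P) z, weightedSqDist_nonneg hα (P := P) z]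
  exact (pow_le_pow_iff_left₀ (norm_nonneg _) (norm_nonneg _) two_ne_zero).1 hsq

theorem weightedSqDist_baryMap_le_mul (hα : ∀ i, 0 ≤ α i) (hα₁ : ∑ i, α i = 1)
    (hP : ∀ i, IsMetricProj (C i) (P i)) (hconv : ∀ i, Convex ℝ (C i))
    (z : H) {w : H} (hw : w ∈ ⋂ i, C i) {c : ℝ} (hc : 0 ≤ c)
    (herr : c * ‖z - w‖ ^ 2 ≤ weightedSqDist α P z) :
    weightedSqDist α P (baryMap α P z) ≤ (1 - c) * weightedSqDist α P z := by
  set Φ := weightedSqDist α P z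
  set g := ‖z - baryMap α P z‖
  have hΦ : Φ ≤ g * ‖z - w‖ :=
    (weightedSqDist_le_inner hα hα₁ hP hconv z hw).trans (real_inner_le_norm _ _)
  have hgrowth : c * Φ ≤ g ^ 2 := by
    have hΦ0 : 0 ≤ Φ := weightedSqDist_nonneg hα z
    rcases hΦ0.eq_or_lt with h0 | hpos
    · rw [← h0, mul_zero]; positivity
    · have : c * Φ ^ 2 ≤ g ^ 2 * Φ := by
        calc c * Φ ^ 2 ≤ c * (g * ‖z - w‖) ^ 2 := by gcongr
          _ = g ^ 2 * (c * ‖z - w‖ ^ 2) := by ring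
          _ ≤ g ^ 2 * Φ := by gcongr
      nlinarith
  linarith [weightedSqDist_baryMap_le hα hα₁ hP z]

theorem exists_mem_iInter_mul_sq_norm_sub_le (hP : ∀ i, IsMetricProj (C i) (P i))
    (hconv : ∀ i, Convex ℝ (C i)) {xbar : H} {R : ℝ} (hR : 0 < R)
    (hball : closedBall xbar R ⊆ ⋂ i, C i) {a : ℝ} (ha : 0 < a) (haα : ∀ i, a ≤ α i)
    {K : ℝ} (hK : 0 < K) {z : H} (hz : ‖z - xbar‖ ≤ K * R) :
    ∃ w ∈ ⋂ i, C i, a / K ^ 2 * ‖z - w‖ ^ 2 ≤ weightedSqDist α P z := by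
  have hα : ∀ i, 0 ≤ α i := fun i => ha.le.trans (haα i)
  set ε := √(weightedSqDist α P z / a)
  have hε : ∀ i, ‖z - P i z‖ ≤ ε := fun i => Real.le_sqrt_of_sq_le <| by
    rw [le_div_iff₀ ha, mul_comm]
    exact (mul_le_mul_of_nonneg_right (haα i) (sq_nonneg _)).trans
      (mul_sq_norm_sub_le_weightedSqDist hα z i)
  obtain ⟨w, hw, hRw⟩ :=
    exists_mem_iInter_mul_norm_sub_le hconv hR hball (fun i => (hP i z).1) (Real.sqrt_nonneg _) hε
  refine ⟨w, hw, ?_⟩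
  have hwK : ‖z - w‖ ≤ ε * K := by
    refine le_of_mul_le_mul_left ?_ hR
    calc R * ‖z - w‖ ≤ ε * ‖z - xbar‖ := hRw
      _ ≤ ε * (K * R) := by gcongr
      _ = R * (ε * K) := by ring
  calc a / K ^ 2 * ‖z - w‖ ^ 2 ≤ a / K ^ 2 * (ε * K) ^ 2 := by gcongr
    _ = a * ε ^ 2 := by field_simp
    _ = weightedSqDist α P z := by
      rw [Real.sq_sqrt (div_nonneg (weightedSqDist_nonneg hα z) ha.le)]; field_simp

theorem antitone_dist_of_eq_baryMap (hα : ∀ i, 0 ≤ α i) (hα₁ : ∑ i, α i = 1)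
    (hP : ∀ i, IsMetricProj (C i) (P i)) (hconv : ∀ i, Convex ℝ (C i))
    (hx : ∀ k, x (k + 1) = baryMap α P (x k)) {y : H} (hy : y ∈ ⋂ i, C i) :
    Antitone fun k => dist (x k) y :=
  antitone_nat_of_succ_le fun k => by
    simpa only [dist_eq_norm, hx] using norm_baryMap_sub_le hα hα₁ hP hconv (x k) hy

theorem exists_mem_iInter_mul_sq_norm_iterate_sub_le (hα₁ : ∑ i, α i = 1)
    (hP : ∀ i, IsMetricProj (C i) (P i)) (hconv : ∀ i, Convex ℝ (C i))
    (hx : ∀ k, x (k + 1) = baryMap α P (x k)) {xbar : H} {R : ℝ} (hR : 0 < R)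
    (hball : closedBall xbar R ⊆ ⋂ i, C i) {a : ℝ} (ha : 0 < a) (haα : ∀ i, a ≤ α i)
    {K : ℝ} (hK : 0 < K) (hx₀ : ‖x 0 - xbar‖ ≤ K * R) (k : ℕ) :
    ∃ w ∈ ⋂ i, C i, a / K ^ 2 * ‖x k - w‖ ^ 2 ≤ weightedSqDist α P (x k) := by
  refine exists_mem_iInter_mul_sq_norm_sub_le hP hconv hR hball ha haα hK (le_trans ?_ hx₀)
  simpa only [dist_eq_norm] using antitone_dist_of_eq_baryMap (fun i => ha.le.trans (haα i)) hα₁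
    hP hconv hx (hball (mem_closedBall_self hR.le)) (Nat.zero_le k)

theorem weightedSqDist_le_div_pow (hα : ∀ i, 0 ≤ α i) (hα₁ : ∑ i, α i = 1)
    (hP : ∀ i, IsMetricProj (C i) (P i)) (hconv : ∀ i, Convex ℝ (C i))
    (hx : ∀ k, x (k + 1) = baryMap α P (x k)) {M : ℝ} (hM : 0 < M)
    (herr : ∀ k, ∃ w ∈ ⋂ i, C i, 4 * M * ‖x k - w‖ ^ 2 ≤ weightedSqDist α P (x k)) (k : ℕ) :
    weightedSqDist α P (x k) ≤ weightedSqDist α P (x 0) / (1 + M / 4) ^ k := by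
  induction k with
  | zero => simp
  | succ k ih =>
    obtain ⟨w, hw, hwk⟩ := herr k
    have hΦ0 := weightedSqDist_nonneg (P := P) hα (x k)
    have hcontr : 1 - 4 * M ≤ 1 / (1 + M / 4) := by
      rw [le_div_iff₀ (by positivity)]; nlinarith
    calc weightedSqDist α P (x (k + 1)) ≤ (1 - 4 * M) * weightedSqDist α P (x k) := by
          rw [hx]; exact weightedSqDist_baryMap_le_mul hα hα₁ hP hconv _ hw (by positivity) hwk
      _ ≤ 1 / (1 + M / 4) * (weightedSqDist α P (x 0) / (1 + M / 4) ^ k) := by gcongr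
      _ = weightedSqDist α P (x 0) / (1 + M / 4) ^ (k + 1) := by rw [pow_succ]; field_simp

theorem exists_tendsto_norm_sub_le [CompleteSpace H] (hα : ∀ i, 0 ≤ α i)
    (hα₁ : ∑ i, α i = 1) (hP : ∀ i, IsMetricProj (C i) (P i)) (hconv : ∀ i, Convex ℝ (C i))
    (hclosed : ∀ i, IsClosed (C i)) (hx : ∀ k, x (k + 1) = baryMap α P (x k)) {M : ℝ}
    (hM : 0 < M)
    (herr : ∀ k, ∃ w ∈ ⋂ i, C i, 4 * M * ‖x k - w‖ ^ 2 ≤ weightedSqDist α P (x k)) :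
    ∃ xs ∈ ⋂ i, C i, Tendsto x atTop (𝓝 xs) ∧
      ∀ k, ‖x k - xs‖ ≤ √(weightedSqDist α P (x 0) / (M * (1 + M / 4) ^ k)) := by
  set Φ₀ := weightedSqDist α P (x 0)
  set e : ℕ → ℝ := fun k => √(Φ₀ / (M * (1 + M / 4) ^ k)) / 2
  have he : Tendsto e atTop (𝓝 0) := by
    have hpow :=
      (tendsto_pow_atTop_atTop_of_one_lt (by linarith : 1 < 1 + M / 4)).const_mul_atTop hM
    simpa using
      ((Real.continuous_sqrt.tendsto 0).comp (tendsto_const_nhds.div_atTop hpow)).div_const 2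
  have hnear : ∀ k, ∃ w ∈ ⋂ i, C i, dist (x k) w ≤ e k := fun k => by
    obtain ⟨w, hw, hwk⟩ := herr k
    have hB : 0 < (1 + M / 4) ^ k := by positivity
    have hrate := (le_div_iff₀ hB).1 (weightedSqDist_le_div_pow hα hα₁ hP hconv hx hM herr k)
    refine ⟨w, hw, ?_⟩
    rw [dist_eq_norm, le_div_iff₀ two_pos, mul_comm]
    refine Real.le_sqrt_of_sq_le ?_
    rw [le_div_iff₀ (by positivity)]
    nlinarith
  obtain ⟨xs, hxs, hlim, hdist⟩ := exists_tendsto_of_antitone_dist (isClosed_iInter hclosed)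
    (fun y hy => antitone_dist_of_eq_baryMap hα hα₁ hP hconv hx hy) he hnear
  refine ⟨xs, hxs, hlim, fun k => ?_⟩
  simpa only [e, dist_eq_norm, mul_div_cancel₀ _ (two_ne_zero (α := ℝ))] using hdist k

end Barycentric

end

/-- **Complexity of the barycentric projection method for regular
intersections**: `C₁,…,C_m` closed convex with `B(x̄,R) ⊆ C = ⋂ᵢ Cᵢ`, weights
`αᵢ > 0` summing to 1, `f(x) = ½ Σᵢ αᵢ dist(x,Cᵢ)²`, `P_{Cᵢ}` the metric
projections, the sequence `x_{k+1} = Σᵢ αᵢ P_{Cᵢ}(x_k)`, and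
`M = ¼(1 + 2‖x₀ − x̄‖/R)^{2−2m}·minᵢ αᵢ`.  Then `x_k` converges strongly to some
`x* ∈ C`, `f(x_k) ≤ f(x₀)/(1+M/4)^k` for `k ≥ 0`, and
`‖x_k − x*‖ ≤ [1 + 8/(M√(1+4/M))]·√(2f(x₀))/(1+M/4)^{(k−1)/2}` for `k ≥ 1`. -/
theorem stmt14 {H : Type*} [NormedAddCommGroup H] [InnerProductSpace ℝ H]
    [CompleteSpace H]
    (m : ℕ) (hm : 2 ≤ m) (C : Fin m → Set H)
    (hclosed : ∀ i, IsClosed (C i)) (hconv : ∀ i, Convex ℝ (C i))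
    (xbar : H) (R : ℝ) (hR : 0 < R)
    (hball : closedBall xbar R ⊆ ⋂ i, C i)
    (α : Fin m → ℝ) (hα : ∀ i, 0 < α i) (hαsum : ∑ i, α i = 1)
    (P : Fin m → H → H)
    (hP : ∀ i z, P i z ∈ C i ∧ ∀ y ∈ C i, ‖z - P i z‖ ≤ ‖z - y‖)
    (f : H → ℝ)
    (hf : ∀ x, f x = (1 / 2) * ∑ i, α i * Metric.infDist x (C i) ^ 2)
    (x : ℕ → H)
    (hiter : ∀ k : ℕ, x (k + 1) = ∑ i, α i • P i (x k))
    (M : ℝ)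
    (hM : M = (1 / 4) * (1 + 2 * ‖x 0 - xbar‖ / R) ^ ((2 : ℤ) - 2 * m) * ⨅ i, α i) :
    ∃ xstar ∈ ⋂ i, C i, Tendsto x atTop (nhds xstar) ∧
      (∀ k : ℕ, f (x k) ≤ f (x 0) / (1 + M / 4) ^ k) ∧
      ∀ k : ℕ, 1 ≤ k → ‖x k - xstar‖ ≤
        (1 + 8 / (M * Real.sqrt (1 + 4 / M))) * Real.sqrt (2 * f (x 0)) /
          (1 + M / 4) ^ (((k : ℝ) - 1) / 2) := by
  have hα0 : ∀ i, 0 ≤ α i := fun i => (hα i).le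
  have hproj : ∀ i, IsMetricProj (C i) (P i) := hP
  have hstep : ∀ k, x (k + 1) = baryMap α P (x k) := hiter
  have h2f : ∀ z, weightedSqDist α P z = 2 * f z := fun z => by
    simp only [hf, weightedSqDist, (hproj _).infDist_eq]; ring
  have : Nonempty (Fin m) := ⟨⟨0, by omega⟩⟩
  set a := ⨅ i, α i
  have haα : ∀ i, a ≤ α i := ciInf_le (finite_range α).bddBelow
  have ha : 0 < a := ciInf_pos_of_finite hα
  set D := 1 + 2 * ‖x 0 - xbar‖ / R
  have hD : 1 ≤ D := le_add_of_nonneg_right (by positivity)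
  have hM4 : 4 * M = a / (D ^ (m - 1)) ^ 2 := by
    rw [hM, zpow_two_sub_two_mul _ (by omega)]; ring
  have hMpos : 0 < M := by linarith [show 0 < a / (D ^ (m - 1)) ^ 2 by positivity]
  have herr : ∀ k, ∃ w ∈ ⋂ i, C i, 4 * M * ‖x k - w‖ ^ 2 ≤ weightedSqDist α P (x k) := by
    rw [hM4]
    refine exists_mem_iInter_mul_sq_norm_iterate_sub_le hαsum hproj hconv hstep hR hball ha haα
      (by positivity) ?_
    calc ‖x 0 - xbar‖ ≤ D * R := by
          rw [add_mul, div_mul_cancel₀ _ hR.ne']; linarith [norm_nonneg (x 0 - xbar)]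
      _ ≤ D ^ (m - 1) * R := by gcongr; exact le_self_pow₀ hD (by omega)
  obtain ⟨xs, hxs, hlim, hdist⟩ :=
    exists_tendsto_norm_sub_le hα0 hαsum hproj hconv hclosed hstep hMpos herr
  refine ⟨xs, hxs, hlim, fun k => ?_, fun k _ => ?_⟩
  · have := weightedSqDist_le_div_pow hα0 hαsum hproj hconv hstep hMpos herr k
    rw [h2f, h2f, mul_div_assoc] at this
    linarith
  · rw [← h2f]
    exact (hdist k).trans (sqrt_div_mul_pow_le hMpos _ k)
end
end

section
/- Globalization of the KL inequality for convex functions (Proposition 6.3): let r₀ > 0 and φ ∈ 𝒦(0,r₀), and assume φ′(f(x))·‖∂⁰f(x)‖ ≥ 1 for every x with 0 < f(x) < r₀. Fix r₁ ∈ (0,r₀) and define φ̂ : [0,∞) → ℝ by φ̂(r) = φ(r) for r ≤ r₁ and φ̂(r) = φ(r₁) + (r − r₁)·φ′(r₁) for r ≥ r₁. Then φ̂ is desingularizing for f on all of H: φ̂′(f(x))·‖∂⁰f(x)‖ ≥ 1 for every x ∈ H with f(x) > 0 (where φ̂′(r) = φ′(r₁) for r ≥ r₁). -/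
/-!
Below level `r₁` the function `φ̂` is `φ`, so only points `x` with `f x > r₁` need work: for
`u ∈ ∂f(x)` we show `φ'(r₁)‖u‖ ≥ 1`. Let `z` be a minimizer and `κ = 2‖u‖² / (r₀ - r₁)`, and
iterate the proximal map `y ↦ y'`, `y' = argmin (f + κ/2 ‖· - y‖²)`, which produces the
subgradients `κ (y - y') ∈ ∂f(y')`. By monotonicity of `∂f` their norms never exceed `‖u‖`, so a
step lowers `f` by at most `‖u‖² / κ = (r₀ - r₁)/2`; and as long as `f ≥ r₁` a step decreases
`‖y - z‖²` by at least `2 r₁ / κ`. Hence, starting from `x`, some iterate `y` has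
`r₁ ≤ f y < r₀` and a subgradient `v` with `‖v‖ ≤ ‖u‖`; the KL inequality at `y` and the
fact that `φ'` is nonincreasing give `1 ≤ φ'(f y)‖v‖ ≤ φ'(r₁)‖u‖`.
-/

open Metric Set Filter Topology
open scoped RealInnerProductSpace

noncomputable section

variable {H : Type*} [NormedAddCommGroup H] [InnerProductSpace ℝ H] [CompleteSpace H]

theorem exists_of_potential_decrease {α : Type*} {P Q : α → Prop} {d : α → ℝ} {δ : ℝ}
    (hδ : 0 < δ) (hd : ∀ a, 0 ≤ d a) (step : ∀ a, P a → ¬ Q a → ∃ b, P b ∧ d b + δ ≤ d a)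
    {a : α} (ha : P a) : ∃ b, P b ∧ Q b := by
  obtain ⟨n, hn⟩ := exists_nat_gt (d a / δ)
  rw [div_lt_iff₀ hδ] at hn
  induction n generalizing a with
  | zero =>
    simp only [CharP.cast_eq_zero, zero_mul] at hn
    linarith [hd a]
  | succ n ih =>
    by_cases hQ : Q a
    · exact ⟨a, ha, hQ⟩
    obtain ⟨b, hb, hdb⟩ := step a ha hQ
    exact ih hb (by push_cast at hn; linarith)

theorem StrongConvexOn.exists_isMinOn {E : Type*} [NormedAddCommGroup E] [NormedSpace ℝ E]
    [CompleteSpace E] {s : Set E} {m : ℝ} {Φ : E → ℝ} (hΦ : StrongConvexOn s m Φ) (hm : 0 < m)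
    (hs : s.Nonempty) (hbdd : BddBelow (Φ '' s)) (hclosed : ∀ r, IsClosed {w ∈ s | Φ w ≤ r}) :
    ∃ y ∈ s, IsMinOn Φ s y := by
  set μ := sInf (Φ '' s)
  have hμ : ∀ p ∈ s, μ ≤ Φ p := fun p hp ↦ csInf_le hbdd (mem_image_of_mem Φ hp)
  have hseq : ∀ n : ℕ, ∃ w ∈ s, Φ w < μ + 1 / (n + 1) := fun n ↦ by
    obtain ⟨_, ⟨w, hw, rfl⟩, hlt⟩ :=
      exists_lt_of_csInf_lt (hs.image Φ) (lt_add_of_pos_right μ (Nat.one_div_pos_of_nat (n := n)))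
    exact ⟨w, hw, hlt⟩
  choose w hws hwμ using hseq
  have hcauchy : CauchySeq w := by
    refine Metric.cauchySeq_iff'.2 fun ε hε ↦ ?_
    obtain ⟨N, hN⟩ := ((tendsto_one_div_add_atTop_nhds_zero_nat (𝕜 := ℝ)).eventually
      (gt_mem_nhds (by positivity : 0 < m * ε ^ 2 / 8))).exists_forall_of_atTop
    refine ⟨N, fun n hn ↦ ?_⟩
    -- strong convexity at the midpoint of `w n` and `w N`, compared with the infimum
    have hhalf : (0 : ℝ) ≤ 1 / 2 := by norm_num
    have hmid := hΦ.2 (hws n) (hws N) hhalf hhalf (by norm_num)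
    have hμmid := hμ _ (hΦ.1 (hws n) (hws N) hhalf hhalf (by norm_num))
    simp only [smul_eq_mul] at hmid
    rw [dist_eq_norm, ← sq_lt_sq₀ (norm_nonneg _) hε.le]
    nlinarith [hwμ n, hwμ N, hN n hn, hN N le_rfl]
  obtain ⟨y, hy⟩ := cauchySeq_tendsto_of_complete hcauchy
  have hlev : ∀ N : ℕ, y ∈ s ∧ Φ y ≤ μ + 1 / (N + 1) := fun N ↦
    (hclosed _).mem_of_tendsto hy (eventually_atTop.2 ⟨N, fun n hn ↦ ⟨hws n, (hwμ n).le.trans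
      (by gcongr)⟩⟩)
  refine ⟨y, (hlev 0).1, fun p hp ↦ (hμ p hp).trans' ?_⟩
  have hlim : Tendsto (fun N : ℕ ↦ μ + 1 / ((N : ℝ) + 1)) atTop (𝓝 μ) := by
    simpa using tendsto_const_nhds.add (tendsto_one_div_add_atTop_nhds_zero_nat (𝕜 := ℝ))
  exact ge_of_tendsto' hlim fun N ↦ (hlev N).2

theorem ConvexOn.strongConvexOn_add_sq_norm_sub {E : Type*} [NormedAddCommGroup E]
    [InnerProductSpace ℝ E] {s : Set E} {F : E → ℝ} (hF : ConvexOn ℝ s F) (κ : ℝ) (x : E) :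
    StrongConvexOn s κ fun w ↦ F w + κ / 2 * ‖w - x‖ ^ 2 := by
  rw [strongConvexOn_iff_convex]
  refine ((hF.add ((-(κ • innerₛₗ ℝ x)).convexOn hF.1)).add_const (κ / 2 * ‖x‖ ^ 2)).congr
    fun w _ ↦ ?_
  simp only [LinearMap.coe_neg, LinearMap.coe_smul, coe_innerₛₗ_apply, Pi.add_apply, Pi.neg_apply,
    Pi.smul_apply, smul_eq_mul, norm_sub_sq_real, real_inner_comm x w]
  ring

theorem convexOn_toReal {E : Type*} [AddCommGroup E] [Module ℝ E] {f : E → EReal}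
    (hbot : ∀ w, f w ≠ ⊥)
    (hconv : ∀ x y : E, ∀ t : ℝ, 0 < t → t < 1 →
      f (t • x + (1 - t) • y) ≤ (t : EReal) * f x + ((1 - t : ℝ) : EReal) * f y) :
    ConvexOn ℝ {w | f w ≠ ⊤} fun w ↦ (f w).toReal := by
  have key : ∀ x, f x ≠ ⊤ → ∀ y, f y ≠ ⊤ → ∀ a b : ℝ, 0 ≤ a → 0 ≤ b → a + b = 1 →
      f (a • x + b • y) ≤ ((a * (f x).toReal + b * (f y).toReal : ℝ) : EReal) := by
    intro x hx y hy a b ha hb hab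
    obtain rfl : b = 1 - a := by linarith
    rcases ha.eq_or_lt with rfl | ha
    · simp [EReal.coe_toReal hy (hbot y)]
    rcases hb.eq_or_lt with hb | hb
    · obtain rfl : a = 1 := by linarith
      simp [EReal.coe_toReal hx (hbot x)]
    have := hconv x y a ha (by linarith)
    rwa [← EReal.coe_toReal hx (hbot x), ← EReal.coe_toReal hy (hbot y)] at this
  refine ⟨fun x hx y hy a b ha hb hab ↦ ne_top_of_le_ne_top (EReal.coe_ne_top _)
    (key x hx y hy a b ha hb hab), fun x hx y hy a b ha hb hab ↦ ?_⟩
  have h := key x hx y hy a b ha hb hab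
  rw [← EReal.coe_toReal (ne_top_of_le_ne_top (EReal.coe_ne_top _) h) (hbot _)] at h
  exact_mod_cast h

theorem isClosed_setOf_toReal_add_le {X : Type*} [TopologicalSpace X] {f : X → EReal}
    (hbot : ∀ w, f w ≠ ⊥) (hlsc : LowerSemicontinuous f) {q : X → ℝ} (hq : Continuous q)
    (r : ℝ) : IsClosed {w | f w ≠ ⊤ ∧ (f w).toReal + q w ≤ r} := by
  have hsum : LowerSemicontinuous fun w ↦ f w + (q w : EReal) :=
    hlsc.add' (continuous_coe_real_ereal.comp hq).lowerSemicontinuous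
      fun w ↦ EReal.continuousAt_add (Or.inr (EReal.coe_ne_bot _)) (Or.inr (EReal.coe_ne_top _))
  convert hsum.isClosed_preimage (r : EReal) using 1
  ext w
  by_cases hw : f w = ⊤
  · simp [hw]
  rw [mem_preimage, mem_Iic, ← EReal.coe_toReal hw (hbot w)]
  norm_cast
  simp [hw]

section Subdifferential

variable {E : Type*} [NormedAddCommGroup E] [InnerProductSpace ℝ E] {f : E → EReal}

theorem ne_top_of_mem_subdiff {x z u : E} (hz : f z ≠ ⊤) (hu : u ∈ subdiff f x) : f x ≠ ⊤ := by
  intro hx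
  have := hu z
  rw [hx, EReal.top_add_coe, top_le_iff] at this
  exact hz this

theorem mem_subdiff_iff_toReal (hbot : ∀ w, f w ≠ ⊥) {x u : E} (hx : f x ≠ ⊤) :
    u ∈ subdiff f x ↔ ∀ p, f p ≠ ⊤ → (f x).toReal + ⟪u, p - x⟫ ≤ (f p).toReal := by
  refine forall_congr' fun p ↦ ?_
  by_cases hp : f p = ⊤
  · simp [hp]
  rw [← EReal.coe_toReal hx (hbot x), ← EReal.coe_toReal hp (hbot p)]
  norm_cast
  simp

theorem smul_sub_mem_subdiff_of_isMinOn (hbot : ∀ w, f w ≠ ⊥)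
    (hF : ConvexOn ℝ {w | f w ≠ ⊤} fun w ↦ (f w).toReal) {κ : ℝ} {x y : E} (hy : f y ≠ ⊤)
    (hmin : IsMinOn (fun w ↦ (f w).toReal + κ / 2 * ‖w - x‖ ^ 2) {w | f w ≠ ⊤} y) :
    κ • (x - y) ∈ subdiff f y := by
  rw [mem_subdiff_iff_toReal hbot hy]
  intro p hp
  have hinner : ⟪κ • (x - y), p - y⟫ = -(κ * ⟪y - x, p - y⟫) := by
    rw [real_inner_smul_left, ← neg_sub y x, inner_neg_left, mul_neg]
  rw [hinner]
  -- compare `y` with the points `t • p + (1 - t) • y` of the segment and let `t → 0`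
  have hseg : ∀ t ∈ Ioo (0 : ℝ) 1,
      (f y).toReal - κ * ⟪y - x, p - y⟫ - (f p).toReal ≤ t * (κ / 2 * ‖p - y‖ ^ 2) := by
    intro t ht
    have hq := hF.2 hp hy ht.1.le (sub_nonneg.2 ht.2.le) (add_sub_cancel t 1)
    have hmq := hmin (hF.1 hp hy ht.1.le (sub_nonneg.2 ht.2.le) (add_sub_cancel t 1))
    have hnorm : ‖t • p + (1 - t) • y - x‖ ^ 2
        = ‖y - x‖ ^ 2 + 2 * t * ⟪y - x, p - y⟫ + t ^ 2 * ‖p - y‖ ^ 2 := by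
      rw [show t • p + (1 - t) • y - x = (y - x) + t • (p - y) by module, norm_add_sq_real,
        real_inner_smul_right, norm_smul, mul_pow, Real.norm_eq_abs, sq_abs]
      ring
    simp only [mem_ofPred_eq, smul_eq_mul, hnorm] at hq hmq
    refine le_of_mul_le_mul_left ?_ ht.1
    linarith
  have hlim : Tendsto (fun t ↦ t * (κ / 2 * ‖p - y‖ ^ 2)) (𝓝[>] 0) (𝓝 0) :=
    tendsto_nhdsWithin_of_tendsto_nhds <| by
      simpa using (continuous_mul_const _).tendsto' 0 0 (by simp)
  have := ge_of_tendsto hlim (mem_of_superset (Ioo_mem_nhdsGT one_pos) hseg)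
  linarith

theorem exists_smul_sub_mem_subdiff [CompleteSpace E] {b : ℝ} (hb : ∀ w, (b : EReal) ≤ f w)
    (hF : ConvexOn ℝ {w | f w ≠ ⊤} fun w ↦ (f w).toReal) (hlsc : LowerSemicontinuous f)
    (hdom : ∃ w, f w ≠ ⊤) {κ : ℝ} (hκ : 0 < κ) (x : E) :
    ∃ y, f y ≠ ⊤ ∧ κ • (x - y) ∈ subdiff f y := by
  have hbot : ∀ w, f w ≠ ⊥ := fun w ↦ ne_bot_of_le_ne_bot (EReal.coe_ne_bot b) (hb w)
  have hbdd : BddBelow ((fun w ↦ (f w).toReal + κ / 2 * ‖w - x‖ ^ 2) '' {w | f w ≠ ⊤}) := by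
    refine ⟨b, ?_⟩
    rintro _ ⟨w, hw, rfl⟩
    have := EReal.toReal_le_toReal (hb w) (EReal.coe_ne_bot b) hw
    rw [EReal.toReal_coe] at this
    have : 0 ≤ κ / 2 * ‖w - x‖ ^ 2 := by positivity
    linarith
  obtain ⟨y, hy, hmin⟩ := (hF.strongConvexOn_add_sq_norm_sub κ x).exists_isMinOn hκ hdom hbdd
    (isClosed_setOf_toReal_add_le hbot hlsc (by fun_prop))
  exact ⟨y, hy, smul_sub_mem_subdiff_of_isMinOn hbot hF hy hmin⟩

theorem inner_sub_sub_nonneg_of_mem_subdiff (hbot : ∀ w, f w ≠ ⊥) {x y u v : E}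
    (hx : f x ≠ ⊤) (hy : f y ≠ ⊤) (hu : u ∈ subdiff f x) (hv : v ∈ subdiff f y) :
    0 ≤ ⟪u - v, x - y⟫ := by
  have h₁ := (mem_subdiff_iff_toReal hbot hx).1 hu y hy
  have h₂ := (mem_subdiff_iff_toReal hbot hy).1 hv x hx
  rw [← neg_sub x y, inner_neg_right] at h₁
  rw [inner_sub_left]
  linarith

theorem norm_smul_sub_le_of_mem_subdiff (hbot : ∀ w, f w ≠ ⊥) {κ : ℝ} (hκ : 0 ≤ κ)
    {y y' v : E} (hy : f y ≠ ⊤) (hy' : f y' ≠ ⊤) (hv : v ∈ subdiff f y)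
    (hv' : κ • (y - y') ∈ subdiff f y') : ‖κ • (y - y')‖ ≤ ‖v‖ := by
  set w := κ • (y - y')
  have hmono : 0 ≤ ⟪v - w, w⟫ := by
    rw [inner_smul_right]
    exact mul_nonneg hκ (inner_sub_sub_nonneg_of_mem_subdiff hbot hy hy' hv hv')
  have hw : ‖w‖ ^ 2 ≤ ‖v‖ * ‖w‖ := by
    rw [inner_sub_left, real_inner_self_eq_norm_sq] at hmono
    linarith [real_inner_le_norm v w]
  nlinarith [norm_nonneg v, norm_nonneg w]

theorem toReal_sub_sq_norm_div_le_of_mem_subdiff (hbot : ∀ w, f w ≠ ⊥) {κ : ℝ} (hκ : 0 < κ)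
    {y y' v : E} (hy : f y ≠ ⊤) (hy' : f y' ≠ ⊤) (hv : v ∈ subdiff f y)
    (hv' : κ • (y - y') ∈ subdiff f y') : (f y).toReal - ‖v‖ ^ 2 / κ ≤ (f y').toReal := by
  have hstep : κ * ‖y - y'‖ ≤ ‖v‖ := by
    simpa [norm_smul, abs_of_pos hκ] using norm_smul_sub_le_of_mem_subdiff hbot hκ.le hy hy' hv hv'
  have hsub := (mem_subdiff_iff_toReal hbot hy).1 hv y' hy'
  have hcs : ⟪v, y - y'⟫ ≤ ‖v‖ * ‖y - y'‖ := real_inner_le_norm v (y - y')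
  rw [← neg_sub y y', inner_neg_right] at hsub
  have : ‖v‖ * ‖y - y'‖ ≤ ‖v‖ ^ 2 / κ := by
    rw [le_div_iff₀ hκ]
    nlinarith [norm_nonneg v]
  linarith

theorem sq_norm_sub_add_le_of_mem_subdiff (hbot : ∀ w, f w ≠ ⊥) {κ : ℝ} (hκ : 0 < κ)
    {y y' z : E} (hy' : f y' ≠ ⊤) (hz : f z ≠ ⊤) (hv' : κ • (y - y') ∈ subdiff f y') :
    ‖y' - z‖ ^ 2 + 2 * ((f y').toReal - (f z).toReal) / κ ≤ ‖y - z‖ ^ 2 := by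
  have hsub := (mem_subdiff_iff_toReal hbot hy').1 hv' z hz
  rw [real_inner_smul_left, ← neg_sub y' z, inner_neg_right] at hsub
  have hexp : ‖y - z‖ ^ 2 = ‖y - y'‖ ^ 2 + 2 * ⟪y - y', y' - z⟫ + ‖y' - z‖ ^ 2 := by
    rw [← norm_add_sq_real, sub_add_sub_cancel]
  have : 2 * ((f y').toReal - (f z).toReal) / κ ≤ 2 * ⟪y - y', y' - z⟫ := by
    rw [div_le_iff₀ hκ]
    linarith
  nlinarith [sq_nonneg ‖y - y'‖]

theorem exists_mem_subdiff_toReal_mem_Ico [CompleteSpace E] (hf0 : ∀ w, 0 ≤ f w)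
    (hF : ConvexOn ℝ {w | f w ≠ ⊤} fun w ↦ (f w).toReal) (hlsc : LowerSemicontinuous f)
    {z : E} (hz : f z = 0) {r₀ r₁ : ℝ} (hr₁ : 0 < r₁) (hr : r₁ < r₀) {x u : E} (hx : f x ≠ ⊤)
    (hu : u ∈ subdiff f x) (hxr : r₁ ≤ (f x).toReal) :
    ∃ y, f y ≠ ⊤ ∧ (f y).toReal ∈ Ico r₁ r₀ ∧ ∃ v ∈ subdiff f y, ‖v‖ ≤ ‖u‖ := by
  have hf0' : ∀ w, ((0 : ℝ) : EReal) ≤ f w := by simpa using hf0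
  have hbot : ∀ w, f w ≠ ⊥ := fun w ↦ ne_bot_of_le_ne_bot (EReal.coe_ne_bot 0) (hf0' w)
  have hz' : f z ≠ ⊤ := by simp [hz]
  have hu0 : 0 < ‖u‖ := by
    refine norm_pos_iff.2 fun hu0 ↦ ?_
    have := (mem_subdiff_iff_toReal hbot hx).1 hu z hz'
    simp only [hu0, inner_zero_left, add_zero, hz, EReal.toReal_zero] at this
    linarith
  have hr' : 0 < r₀ - r₁ := sub_pos.2 hr
  -- one proximal step with parameter `κ` lowers `f` by at most `‖u‖ ^ 2 / κ = (r₀ - r₁) / 2`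
  set κ := 2 * ‖u‖ ^ 2 / (r₀ - r₁)
  have hκ : 0 < κ := div_pos (by positivity) hr'
  have hκu : ‖u‖ ^ 2 / κ = (r₀ - r₁) / 2 := by
    simp only [κ]
    field_simp
  refine (exists_of_potential_decrease
    (P := fun y ↦ f y ≠ ⊤ ∧ r₁ ≤ (f y).toReal ∧ ∃ v ∈ subdiff f y, ‖v‖ ≤ ‖u‖)
    (Q := fun y ↦ (f y).toReal < r₀) (d := fun y ↦ ‖y - z‖ ^ 2) (div_pos (mul_pos two_pos hr₁) hκ)
    (fun _ ↦ sq_nonneg _) ?_ ⟨hx, hxr, u, hu, le_rfl⟩).imp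
    fun y ⟨⟨hy, hyr, hv⟩, hyr'⟩ ↦ ⟨hy, ⟨hyr, hyr'⟩, hv⟩
  rintro y ⟨hy, -, v, hv, hvu⟩ hyr
  obtain ⟨y', hy', hv'⟩ := exists_smul_sub_mem_subdiff hf0' hF hlsc ⟨z, hz'⟩ hκ y
  have hnorm := norm_smul_sub_le_of_mem_subdiff hbot hκ.le hy hy' hv hv'
  have hval := toReal_sub_sq_norm_div_le_of_mem_subdiff hbot hκ hy hy' hv hv'
  have hdist := sq_norm_sub_add_le_of_mem_subdiff hbot hκ hy' hz' hv'
  have hvu2 : ‖v‖ ^ 2 / κ ≤ (r₀ - r₁) / 2 := by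
    rw [← hκu]
    gcongr
  have hy'r : r₁ ≤ (f y').toReal := by linarith [not_lt.1 hyr]
  refine ⟨y', ⟨hy', hy'r, _, hv', hnorm.trans hvu⟩, ?_⟩
  rw [hz, EReal.toReal_zero, sub_zero] at hdist
  have : 2 * r₁ / κ ≤ 2 * (f y').toReal / κ := by gcongr
  linarith

end Subdifferential

theorem stmt17_general (f : H → EReal)
    (hbot : ∀ x, f x ≠ ⊥)
    (hlsc : LowerSemicontinuous f)
    (hconv : ∀ x y : H, ∀ t : ℝ, 0 < t → t < 1 →
      f (t • x + (1 - t) • y) ≤ (t : EReal) * f x + ((1 - t : ℝ) : EReal) * f y)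
    (hmin : ∃ z, z ∈ argminSet f ∧ f z = 0)
    (r0 r1 : ℝ) (hr1 : 0 < r1) (hr1r0 : r1 < r0)
    (φ φ' : ℝ → ℝ)
    (hφderiv : ∀ s ∈ Ioo (0 : ℝ) r0, HasDerivAt φ (φ' s) s)
    (hφconc : ConcaveOn ℝ (Ico 0 r0) φ)
    (hφ'pos : ∀ s ∈ Ioo (0 : ℝ) r0, 0 < φ' s)
    (hKL : ∀ x, 0 < f x → f x < (r0 : EReal) →
      ∀ u ∈ subdiff f x, 1 ≤ φ' ((f x).toReal) * ‖u‖)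
    (φhat' : ℝ → ℝ)
    (hφhat' : ∀ r, φhat' r = if r ≤ r1 then φ' r else φ' r1) :
    ∀ x, 0 < f x → ∀ u ∈ subdiff f x, 1 ≤ φhat' ((f x).toReal) * ‖u‖ := by
  obtain ⟨z, hz_min, hz⟩ := hmin
  have hf0 : ∀ w, 0 ≤ f w := fun w ↦ hz ▸ hz_min w
  have hφ'_anti : AntitoneOn φ' (Ioo 0 r0) := by
    have := (hφconc.subset Ioo_subset_Ico_self (convex_Ioo 0 r0)).antitoneOn_deriv
      fun s hs ↦ (hφderiv s hs).differentiableAt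
    intro s hs t ht hst
    simpa only [(hφderiv s hs).deriv, (hφderiv t ht).deriv] using this hs ht hst
  intro x hx_pos u hu
  have hx : f x ≠ ⊤ := ne_top_of_mem_subdiff (z := z) (by simp [hz]) hu
  rw [hφhat']
  split_ifs with hxr
  · refine hKL x hx_pos ?_ u hu
    rw [← EReal.coe_toReal hx (hbot x)]
    exact_mod_cast hxr.trans_lt hr1r0
  obtain ⟨y, hy, ⟨hyr₁, hyr₀⟩, v, hv, hvu⟩ := exists_mem_subdiff_toReal_mem_Ico hf0
    (convexOn_toReal hbot hconv) hlsc hz hr1 hr1r0 hx hu (not_le.1 hxr).le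
  have hy_eq := (EReal.coe_toReal hy (hbot y)).symm
  calc 1 ≤ φ' (f y).toReal * ‖v‖ := hKL y (by rw [hy_eq]; exact_mod_cast hr1.trans_le hyr₁)
        (by rw [hy_eq]; exact_mod_cast hyr₀) v hv
    _ ≤ φ' r1 * ‖u‖ := mul_le_mul (hφ'_anti ⟨hr1, hr1r0⟩ ⟨hr1.trans_le hyr₁, hyr₀⟩ hyr₁) hvu
        (norm_nonneg v) (hφ'pos r1 ⟨hr1, hr1r0⟩).le

/-- **Proposition 6.3** (globalization of the KL inequality, convex case): if
`f` is proper lsc convex with `min f = 0`, `argmin f ≠ ∅`, `φ ∈ 𝒦(0,r₀)`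
desingularizes `f` on `[0 < f < r₀]` and `0 < r₁ < r₀`, then the function
`φ̂(r) = φ(r)` for `r ≤ r₁` and `φ̂(r) = φ(r₁) + (r − r₁)φ'(r₁)` for `r ≥ r₁`
is desingularizing for `f` on all of `H`: `φ̂'(f(x))·‖∂⁰f(x)‖ ≥ 1` whenever
`f(x) > 0` (with `φ̂'(r) = φ'(r₁)` for `r ≥ r₁`; the KL inequality with
`‖∂⁰f(x)‖ = dist(0,∂f(x)) ∈ [0,∞]` is expressed via all `u ∈ ∂f(x)`). -/
theorem stmt17 (f : H → EReal)
    (hbot : ∀ x, f x ≠ ⊥) (htop : ∃ x, f x ≠ ⊤)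
    (hlsc : LowerSemicontinuous f)
    (hconv : ∀ x y : H, ∀ t : ℝ, 0 < t → t < 1 →
      f (t • x + (1 - t) • y) ≤ (t : EReal) * f x + ((1 - t : ℝ) : EReal) * f y)
    (hmin : ∃ z, z ∈ argminSet f ∧ f z = 0)
    (r0 r1 : ℝ) (hr0 : 0 < r0) (hr1 : 0 < r1) (hr1r0 : r1 < r0)
    (φ φ' : ℝ → ℝ)
    (hφcont : ContinuousOn φ (Ico 0 r0))
    (hφderiv : ∀ s ∈ Ioo (0 : ℝ) r0, HasDerivAt φ (φ' s) s)
    (hφ'cont : ContinuousOn φ' (Ioo 0 r0))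
    (hφconc : ConcaveOn ℝ (Ico 0 r0) φ)
    (hφ0 : φ 0 = 0)
    (hφ'pos : ∀ s ∈ Ioo (0 : ℝ) r0, 0 < φ' s)
    (hKL : ∀ x, 0 < f x → f x < (r0 : EReal) →
      ∀ u ∈ subdiff f x, 1 ≤ φ' ((f x).toReal) * ‖u‖)
    (φhat φhat' : ℝ → ℝ)
    (hφhat : ∀ r, φhat r = if r ≤ r1 then φ r else φ r1 + (r - r1) * φ' r1)
    (hφhat' : ∀ r, φhat' r = if r ≤ r1 then φ' r else φ' r1) :
    ∀ x, 0 < f x → ∀ u ∈ subdiff f x, 1 ≤ φhat' ((f x).toReal) * ‖u‖ :=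
  stmt17_general f hbot hlsc hconv hmin r0 r1 hr1 hr1r0 φ φ' hφderiv hφconc hφ'pos hKL φhat' hφhat'
end
end

section
/- Hölderian error bounds do not imply the KL inequality without convexity: let r ≥ 2 be an integer and define f : ℝ → ℝ by f(x) = x^{2r}·(2 + cos(1/x)) for x ≠ 0 and f(0) = 0. Then: (a) f is differentiable on ℝ with f′(0) = 0; (b) f(x) ≥ x^{2r} for all x ∈ ℝ (so f satisfies the Hölderian error bound f(x) ≥ dist(x, argmin f)^{2r} with argmin f = {0}); and (c) there exists a sequence (x_k) of strictly positive real numbers converging to 0 such that f′(x_k) = 0 for all k (so f has positive critical values accumulating at 0 and cannot satisfy the KL inequality at 0). -/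
/-!
Near `0`, `f(x) = x^m (2 + cos (1/x))` is squeezed between `x^m` and `3 x^m`, which gives
differentiability at `0` and the error bound. But `f` oscillates: at `1/(jπ)` it equals
`3 (jπ)^{-m}` for even `j` and `(jπ)^{-m}` for odd `j`. Once `(1 + 1/j)^m < e < 3`, i.e. for
odd `j ≥ m`, the value at `1/(jπ)` lies below the values at the two neighbouring points
`1/((j ± 1)π)`, so `f` has a local minimum, hence a critical point, in between.
-/

open Set Filter Real Asymptotics

theorem hasDerivAt_zero_of_isBigO_pow {𝕜 F : Type*} [NontriviallyNormedField 𝕜]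
    [NormedAddCommGroup F] [NormedSpace 𝕜 F] {f : 𝕜 → F} {n : ℕ} (hn : 1 < n) (hf₀ : f 0 = 0)
    (hf : f =O[nhds 0] fun x => x ^ n) : HasDerivAt f 0 0 := by
  rw [hasDerivAt_iff_isLittleO_nhds_zero]
  simpa [hf₀] using hf.trans_isLittleO (isLittleO_pow_id hn)

theorem one_add_inv_pow_lt_three {m n : ℕ} (hmn : m ≤ n) : (1 + (n : ℝ)⁻¹) ^ m < 3 :=
  calc (1 + (n : ℝ)⁻¹) ^ m ≤ (1 + (n : ℝ)⁻¹) ^ n :=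
        pow_le_pow_right₀ (le_add_of_nonneg_right (by positivity)) hmn
    _ ≤ exp 1 := one_add_inv_pow_le_exp
    _ < 3 := exp_one_lt_three

/-- `0⁻¹ = 0` in Lean, so `oscPow m 0 = 0` for `m ≠ 0`, as in the paper's `f(0) = 0`. -/
noncomputable def oscPow (m : ℕ) (x : ℝ) : ℝ := x ^ m * (2 + cos x⁻¹)

namespace oscPow

variable {m : ℕ}

theorem apply_zero (hm : m ≠ 0) : oscPow m 0 = 0 := by
  simp [oscPow, hm]

theorem abs_apply_le (x : ℝ) : |oscPow m x| ≤ 3 * |x| ^ m := by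
  rw [oscPow, abs_mul, abs_pow, mul_comm]
  gcongr
  rw [abs_le]
  constructor <;> linarith [neg_one_le_cos x⁻¹, cos_le_one x⁻¹]

theorem pow_le_apply (hm : Even m) (x : ℝ) : x ^ m ≤ oscPow m x :=
  le_mul_of_one_le_right (hm.pow_nonneg x) (by linarith [neg_one_le_cos x⁻¹])

theorem setOf_forall_apply_le_eq (hm : Even m) (hm₀ : m ≠ 0) :
    {x : ℝ | ∀ y, oscPow m x ≤ oscPow m y} = {0} := by
  ext x
  constructor
  · intro hx
    have : x ^ m ≤ 0 := (pow_le_apply hm x).trans (apply_zero hm₀ ▸ hx 0)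
    exact pow_eq_zero_iff hm₀ |>.mp (this.antisymm (hm.pow_nonneg x))
  · rintro rfl y
    rw [apply_zero hm₀]
    exact (hm.pow_nonneg y).trans (pow_le_apply hm y)

theorem hasDerivAt_zero (hm : 2 ≤ m) : HasDerivAt (oscPow m) 0 0 := by
  refine hasDerivAt_zero_of_isBigO_pow hm (apply_zero (by omega)) (.of_bound 3 ?_)
  filter_upwards with x
  simpa only [norm_eq_abs, abs_pow] using abs_apply_le x

theorem differentiableAt_of_ne_zero {x : ℝ} (hx : x ≠ 0) : DifferentiableAt ℝ (oscPow m) x :=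
  (differentiableAt_pow m).mul <|
    ((differentiable_cos _).comp x (differentiableAt_inv hx)).const_add 2

theorem differentiable (hm : 2 ≤ m) : Differentiable ℝ (oscPow m) := fun x => by
  rcases eq_or_ne x 0 with rfl | hx
  · exact (hasDerivAt_zero hm).differentiableAt
  · exact differentiableAt_of_ne_zero hx

theorem apply_inv_natCast_mul_pi (j : ℕ) :
    oscPow m ((j * π)⁻¹) = ((j * π)⁻¹) ^ m * (2 + (-1) ^ j) := by
  rw [oscPow, inv_inv, cos_nat_mul_pi]

theorem exists_isLocalMin_mem_Ioo {k : ℕ} (hk : 0 < k) (hm : m ≤ 2 * k + 1) :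
    ∃ x ∈ Ioo ((((2 * k + 2 : ℕ) : ℝ) * π)⁻¹) ((((2 * k : ℕ) : ℝ) * π)⁻¹),
      IsLocalMin (oscPow m) x := by
  set a := (((2 * k + 2 : ℕ) : ℝ) * π)⁻¹
  set c := (((2 * k + 1 : ℕ) : ℝ) * π)⁻¹
  set b := (((2 * k : ℕ) : ℝ) * π)⁻¹
  have ha₀ : 0 < a := by positivity
  have hac : a < c := inv_strictAnti₀ (by positivity) (by gcongr; omega)
  have hcb : c < b :=
    inv_strictAnti₀ (mul_pos (by norm_cast; omega) pi_pos) (by gcongr; omega)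
  have hfa : oscPow m a = 3 * a ^ m := by
    rw [apply_inv_natCast_mul_pi, Even.neg_one_pow ⟨k + 1, by ring⟩]; ring
  have hfb : oscPow m b = 3 * b ^ m := by
    rw [apply_inv_natCast_mul_pi, (even_two_mul k).neg_one_pow]; ring
  have hfc : oscPow m c = c ^ m := by
    rw [apply_inv_natCast_mul_pi, (odd_two_mul_add_one k).neg_one_pow]; ring
  have hca : c = (1 + ((2 * k + 1 : ℕ) : ℝ)⁻¹) * a := by
    simp only [a, c]; field_simp; push_cast; ring
  have hca' : oscPow m c < oscPow m a := by
    rw [hfa, hfc, hca, mul_pow]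
    exact mul_lt_mul_of_pos_right (one_add_inv_pow_lt_three hm) (by positivity)
  have hcb' : oscPow m c < oscPow m b := by
    rw [hfb, hfc]
    have : c ^ m ≤ b ^ m := pow_le_pow_left₀ (ha₀.trans hac).le hcb.le m
    linarith [pow_pos (ha₀.trans (hac.trans hcb)) m]
  have hcont : ContinuousOn (oscPow m) (Icc a b) := fun x hx =>
    (differentiableAt_of_ne_zero (ha₀.trans_le hx.1).ne').continuousAt.continuousWithinAt
  refine isCompact_Icc.exists_isLocalMin_mem_open Ioo_subset_Icc_self hcont
    (z := c) ⟨hac.le, hcb.le⟩ ?_ isOpen_Ioo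
  rw [Icc_sdiff_Ioo_same (hac.trans hcb).le]
  rintro x (rfl | rfl) <;> assumption

theorem exists_seq_isLocalMin_tendsto_zero (m : ℕ) :
    ∃ x : ℕ → ℝ, (∀ n, 0 < x n) ∧ Tendsto x atTop (nhds 0) ∧ ∀ n, IsLocalMin (oscPow m) (x n) := by
  choose x hx hmin using fun n : ℕ =>
    exists_isLocalMin_mem_Ioo (m := m) (k := n + m + 1) (by omega) (by omega)
  have hpos n : 0 < x n := lt_of_le_of_lt (by positivity) (hx n).1
  refine ⟨x, hpos, ?_, hmin⟩
  have hupper : Tendsto (fun n : ℕ => (((2 * (n + m + 1) : ℕ) : ℝ) * π)⁻¹) atTop (nhds 0) :=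
    tendsto_inv_atTop_zero.comp <| (tendsto_natCast_atTop_atTop.comp <|
      tendsto_atTop_mono (fun n => by dsimp only [id]; omega) tendsto_id).atTop_mul_const pi_pos
  exact tendsto_of_tendsto_of_tendsto_of_le_of_le tendsto_const_nhds hupper
    (fun n => (hpos n).le) (fun n => (hx n).2.le)

end oscPow

/-- **Hölderian error bounds do not imply the KL inequality without
convexity**: for an integer `r ≥ 2`, the function
`f(x) = x^{2r}·(2 + cos(1/x))` for `x ≠ 0`, `f(0) = 0` (note that in Lean
`0⁻¹ = 0`, so the single formula below defines exactly this function, since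
`0^{2r}·(2 + cos 0) = 0`), satisfies:
(a) `f` is differentiable on `ℝ` with `f'(0) = 0`;
(b) `f(x) ≥ x^{2r}` for all `x`, and `argmin f = {0}` (so `f` satisfies the
Hölderian error bound `f(x) ≥ dist(x, argmin f)^{2r}`); and
(c) there is a sequence of strictly positive critical points of `f` converging
to `0` (so `f` has positive critical values accumulating at `0` and cannot
satisfy the KL inequality at `0`). -/
theorem stmt19 (r : ℕ) (hr : 2 ≤ r) (f : ℝ → ℝ)
    (hf : ∀ x : ℝ, f x = x ^ (2 * r) * (2 + Real.cos x⁻¹)) :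
    (Differentiable ℝ f ∧ deriv f 0 = 0) ∧
    ((∀ x : ℝ, x ^ (2 * r) ≤ f x) ∧ {x : ℝ | ∀ y, f x ≤ f y} = {0}) ∧
    ∃ x : ℕ → ℝ, (∀ k, 0 < x k) ∧ Tendsto x atTop (nhds 0) ∧
      ∀ k, deriv f (x k) = 0 := by
  obtain rfl : f = oscPow (2 * r) := funext hf
  have hm : 2 ≤ 2 * r := by omega
  have hm_even : Even (2 * r) := even_two_mul r
  obtain ⟨x, hx_pos, hx_lim, hx_min⟩ := oscPow.exists_seq_isLocalMin_tendsto_zero (2 * r)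
  exact ⟨⟨oscPow.differentiable hm, (oscPow.hasDerivAt_zero hm).deriv⟩,
    ⟨oscPow.pow_le_apply hm_even, oscPow.setOf_forall_apply_le_eq hm_even (by omega)⟩,
    x, hx_pos, hx_lim, fun k => (hx_min k).deriv_eq_zero⟩
end
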